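/- arXiv:2306.05185 — 8 statements merged into one kernel-verified Lean document; each statement's English description precedes it below -/
import Mathlib

section
/- Let ε > 0 and define η : (−ε, ∞) → ℝ by η(t) = min(0,t)² / (t + ε). Then: (i) η is continuously differentiable on (−ε, ∞); (ii) η(t) = 0 for all t ≥ 0; (iii) η(t) ≥ min(0,t)²/ε for all t ∈ (−ε, ∞); (iv) η(t) → +∞ as t → −ε from the right; (v) η is convex on (−ε, ∞). -/
open Set Filter Topology

lemma min_sq_hasDerivAt (t : ℝ) :
    HasDerivAt (fun s : ℝ => (min 0 s) ^ 2) (2 * min 0 t) t := by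
  rcases lt_trichotomy t 0 with ht | rfl | ht
  · have h1 : HasDerivAt (fun s : ℝ => s ^ 2) (2 * t) t := by
      simpa using hasDerivAt_pow 2 t
    have heq : (fun s : ℝ => s ^ 2) =ᶠ[𝓝 t] fun s => (min 0 s) ^ 2 := by
      filter_upwards [Iio_mem_nhds ht] with s hs
      rw [min_eq_right (le_of_lt hs)]
    have := h1.congr_of_eventuallyEq heq.symm
    rwa [min_eq_right ht.le]
  · rw [hasDerivAt_iff_isLittleO]
    simp only [min_self, ne_eq, OfNat.ofNat_ne_zero, not_false_eq_true, zero_pow, sub_zero,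
      mul_zero, smul_zero]
    rw [Asymptotics.isLittleO_iff]
    intro c hc
    have : Metric.ball (0:ℝ) c ∈ 𝓝 (0:ℝ) := Metric.ball_mem_nhds _ hc
    filter_upwards [this] with x hx
    have hx' : |x| < c := by simpa [Real.dist_eq] using hx
    have h1 : |min 0 x| ≤ |x| := by
      rcases le_or_gt x 0 with h | h
      · rw [min_eq_right h]
      · rw [min_eq_left h.le]; simp [abs_nonneg]
    calc ‖(min 0 x) ^ 2‖ = |min 0 x| * |min 0 x| := by
          rw [Real.norm_eq_abs, abs_pow, sq]
      _ ≤ |x| * |x| := mul_le_mul h1 h1 (abs_nonneg _) (abs_nonneg _)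
      _ ≤ c * |x| := by nlinarith [abs_nonneg x]
      _ = c * ‖x‖ := by rw [Real.norm_eq_abs]
  · have heq : (fun _ : ℝ => (0:ℝ)) =ᶠ[𝓝 t] fun s => (min 0 s) ^ 2 := by
      filter_upwards [Ioi_mem_nhds ht] with s hs
      rw [min_eq_left (le_of_lt hs)]; simp
    have := (hasDerivAt_const t (0:ℝ)).congr_of_eventuallyEq heq.symm
    rwa [min_eq_left ht.le, mul_zero]

/-- Properties of the barrier function `η(t) = min(0,t)² / (t + ε)`. -/
theorem eta_properties (ε : ℝ) (hε : 0 < ε)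
    (η : ℝ → ℝ) (hη : ∀ t, η t = (min 0 t) ^ 2 / (t + ε)) :
    ContDiffOn ℝ 1 η (Ioi (-ε)) ∧
    (∀ t : ℝ, 0 ≤ t → η t = 0) ∧
    (∀ t ∈ Ioi (-ε), η t ≥ (min 0 t) ^ 2 / ε) ∧
    Tendsto η (𝓝[>] (-ε)) atTop ∧
    ConvexOn ℝ (Ioi (-ε)) η := by
  have hpos : ∀ t ∈ Ioi (-ε), 0 < t + ε := by
    intro t ht; have := mem_Ioi.mp ht; linarith
  have hne : ∀ t ∈ Ioi (-ε), t + ε ≠ 0 := fun t ht => (hpos t ht).ne'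
  set D : ℝ → ℝ :=
    fun t => (2 * min 0 t * (t + ε) - (min 0 t) ^ 2 * 1) / (t + ε) ^ 2 with hDdef
  have hderiv : ∀ t ∈ Ioi (-ε), HasDerivAt η (D t) t := by
    intro t ht
    have h1 := (min_sq_hasDerivAt t).div ((hasDerivAt_id t).add_const ε) (hne t ht)
    have : η = fun s => (min 0 s) ^ 2 / (s + ε) := funext hη
    rw [this]
    exact h1
  -- closed form of the derivative
  have hDeq : ∀ t ∈ Ioi (-ε), D t = min 0 (1 - ε ^ 2 / (t + ε) ^ 2) := by
    intro t ht
    have htε : 0 < t + ε := hpos t ht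
    rcases le_or_gt 0 t with h0 | h0
    · have h1 : ε ^ 2 ≤ (t + ε) ^ 2 := by nlinarith
      have h2 : (0:ℝ) ≤ 1 - ε ^ 2 / (t + ε) ^ 2 := by
        rw [sub_nonneg, div_le_one (by positivity)]; exact h1
      rw [min_eq_left h2, hDdef]
      simp [min_eq_left h0]
    · have h1 : (t + ε) ^ 2 ≤ ε ^ 2 := by nlinarith [mem_Ioi.mp ht]
      have h2 : 1 - ε ^ 2 / (t + ε) ^ 2 ≤ 0 := by
        rw [sub_nonpos, le_div_iff₀ (by positivity)]; nlinarith
      rw [min_eq_right h2, hDdef]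
      simp only [min_eq_right h0.le]
      field_simp
      ring
  have hmono : MonotoneOn D (Ioi (-ε)) := by
    intro a ha b hb hab
    rw [hDeq a ha, hDeq b hb]
    have ha' : 0 < a + ε := hpos a ha
    have hb' : 0 < b + ε := hpos b hb
    have : ε ^ 2 / (b + ε) ^ 2 ≤ ε ^ 2 / (a + ε) ^ 2 := by
      gcongr
    exact min_le_min le_rfl (by linarith)
  have hmono' : MonotoneOn (deriv η) (interior (Ioi (-ε))) := by
    rw [interior_Ioi]
    intro a ha b hb hab
    rw [(hderiv a ha).deriv, (hderiv b hb).deriv]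
    exact hmono ha hb hab
  have hdiff : DifferentiableOn ℝ η (Ioi (-ε)) :=
    fun t ht => (hderiv t ht).differentiableAt.differentiableWithinAt
  have hcontD : ContinuousOn D (Ioi (-ε)) := by
    apply ContinuousOn.div
    · fun_prop
    · fun_prop
    · intro t ht; exact pow_ne_zero 2 (hne t ht)
  have hcd : ContDiffOn ℝ 1 η (Ioi (-ε)) := by
    apply (contDiffOn_succ_iff_deriv_of_isOpen (n := 0) isOpen_Ioi).mpr
    refine ⟨hdiff, by simp, ?_⟩
    rw [contDiffOn_zero]
    exact hcontD.congr fun t ht => (hderiv t ht).deriv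
  refine ⟨hcd, ?_, ?_, ?_, ?_⟩
  · intro t ht
    rw [hη t, min_eq_left ht]
    simp
  · intro t ht
    rw [hη t]
    rcases le_or_gt 0 t with h0 | h0
    · rw [min_eq_left h0]; simp
    · have h1 : 0 < t + ε := hpos t ht
      have h2 : t + ε ≤ ε := by linarith
      gcongr
  · have h1 : Tendsto (fun t => (min 0 t) ^ 2) (𝓝[>] (-ε)) (𝓝 (ε ^ 2)) := by
      have hc : ContinuousAt (fun t : ℝ => (min 0 t) ^ 2) (-ε) := by fun_prop
      have := hc.tendsto.mono_left (nhdsWithin_le_nhds (s := Ioi (-ε)))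
      simpa [min_eq_right (neg_nonpos_of_nonneg hε.le), neg_pow] using this
    have h2 : Tendsto (fun t : ℝ => (t + ε)⁻¹) (𝓝[>] (-ε)) atTop := by
      apply tendsto_inv_nhdsGT_zero.comp
      rw [tendsto_nhdsWithin_iff]
      constructor
      · have : Tendsto (fun t : ℝ => t + ε) (𝓝 (-ε)) (𝓝 0) := by
          have h : Tendsto (fun t : ℝ => t + ε) (𝓝 (-ε)) (𝓝 (-ε + ε)) :=
            Filter.Tendsto.add_const ε (f := fun t : ℝ => t) tendsto_id
          simpa using h
        exact this.mono_left nhdsWithin_le_nhds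
      · filter_upwards [self_mem_nhdsWithin] with t ht
        exact mem_Ioi.mpr (by linarith [mem_Ioi.mp ht])
    have h3 := h1.pos_mul_atTop (by positivity) h2
    exact h3.congr fun t => ((hη t).trans (div_eq_mul_inv _ _)).symm
  · exact MonotoneOn.convexOn_of_deriv (convex_Ioi _) hcd.continuousOn
      (by rwa [interior_Ioi]) hmono'
end

section
/- Let f, g : ℝ → ℝ be regulated functions. Then, as an equality in [0, ∞], the supremum over t ∈ ℝ of |f(t+) − g(t+)| equals the essential supremum of |f − g| with respect to Lebesgue measure on ℝ; the same equality holds with right limits replaced by left limits. -/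
open Set Filter Topology MeasureTheory

/-! Write `h = f - g` and `R = Rf - Rg`, the function of right limits of `h`. Being a function of
right limits, `R` is itself right-continuous, so `dist (h y) (R y) → 0` as `y ↓ x` at every `x`;
hence each set `{x | 1/(n+1) ≤ dist (h x) (R x)}` is isolated from the right at each of its points,
and is therefore countable. So `h = R` almost everywhere, giving `‖h‖_∞ ≤ sup |R|`. Conversely,
`R x` is a limit of `h` along `𝓝[>] x`, a filter meeting every co-null (hence dense) set, in
particular the set where `|h| ≤ ‖h‖_∞`; so `|R x| ≤ ‖h‖_∞`. Left limits are handled dually. -/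

/-- A function `f : ℝ → ℝ` is regulated if at every point the one-sided limits exist. -/
def Regulated (f : ℝ → ℝ) : Prop :=
  ∀ t : ℝ, (∃ l : ℝ, Tendsto f (𝓝[<] t) (𝓝 l)) ∧ ∃ l : ℝ, Tendsto f (𝓝[>] t) (𝓝 l)

section OneSidedLimits

variable {α β : Type*} [LinearOrder α] [TopologicalSpace α] [OrderTopology α] [DenselyOrdered α]

theorem continuousWithinAt_Ioi_of_tendsto_nhdsGT [NoMaxOrder α] [TopologicalSpace β]
    [RegularSpace β] {h R : α → β} (hR : ∀ x, Tendsto h (𝓝[>] x) (𝓝 (R x))) (x : α) :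
    ContinuousWithinAt R (Ioi x) x := by
  refine (closed_nhds_basis (R x)).tendsto_right_iff.2 fun V ⟨hV, hVc⟩ => ?_
  obtain ⟨u, hxu, hu⟩ := mem_nhdsGT_iff_exists_Ioo_subset.1 (hR x hV)
  filter_upwards [Ioo_mem_nhdsGT hxu] with y hy
  exact hVc.mem_of_tendsto (hR y) <|
    mem_of_superset (Ioo_mem_nhdsGT hy.2) fun z hz => hu ⟨hy.1.trans hz.1, hz.2⟩

variable [SecondCountableTopology α] [MetricSpace β]

theorem countable_setOf_ne_of_tendsto_nhdsGT [NoMaxOrder α] {h R : α → β}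
    (hR : ∀ x, Tendsto h (𝓝[>] x) (𝓝 (R x))) : {x | h x ≠ R x}.Countable := by
  have hdist (x : α) : Tendsto (fun y => dist (h y) (R y)) (𝓝[>] x) (𝓝 0) := by
    simpa using (hR x).dist (continuousWithinAt_Ioi_of_tendsto_nhdsGT hR x)
  have hcover : {x | h x ≠ R x} ⊆ ⋃ n : ℕ, {x | 1 / (n + 1 : ℝ) ≤ dist (h x) (R x)} :=
    fun x hx => mem_iUnion.2 <| (exists_nat_one_div_lt (dist_pos.2 hx)).imp fun _ => le_of_lt
  refine (countable_iUnion fun n => ?_).mono hcover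
  set S := {x | 1 / (n + 1 : ℝ) ≤ dist (h x) (R x)}
  refine (countable_setOfPred_isolated_right_within (s := S)).mono fun x hx => ?_
  refine ⟨hx, ?_⟩
  rw [inter_comm, nhdsWithin_inter', inf_principal_eq_bot]
  filter_upwards [(hdist x).eventually (gt_mem_nhds (by positivity : (0 : ℝ) < 1 / (n + 1)))]
    with y hy using not_le.2 hy

theorem countable_setOf_ne_of_tendsto_nhdsLT [NoMinOrder α] {h L : α → β}
    (hL : ∀ x, Tendsto h (𝓝[<] x) (𝓝 (L x))) : {x | h x ≠ L x}.Countable :=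
  countable_setOf_ne_of_tendsto_nhdsGT (α := αᵒᵈ) hL

end OneSidedLimits

theorem enorm_le_eLpNorm_top_of_tendsto_nhdsWithin {X E : Type*} [TopologicalSpace X]
    [MeasurableSpace X] {μ : Measure X} [μ.IsOpenPosMeasure] [TopologicalSpace E]
    [ContinuousENorm E] {f : X → E} {U : Set X} {x : X} {a : E} (hU : IsOpen U)
    (hx : x ∈ closure U) (hf : Tendsto f (𝓝[U] x) (𝓝 a)) : ‖a‖ₑ ≤ eLpNorm f ⊤ μ := by
  set G := {y | ‖f y‖ₑ ≤ eLpNorm f ⊤ μ}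
  have hG : Dense G := μ.dense_of_ae (by simpa using ae_le_eLpNormEssSup)
  have : (𝓝[U ∩ G] x).NeBot := mem_closure_iff_nhdsWithin_neBot.1 <|
    closure_minimal (hG.open_subset_closure_inter hU) isClosed_closure hx
  have hlim : Tendsto (fun y => ‖f y‖ₑ) (𝓝[U ∩ G] x) (𝓝 ‖a‖ₑ) :=
    (continuous_enorm.tendsto a).comp (hf.mono_left (nhdsWithin_mono _ inter_subset_left))
  exact le_of_tendsto hlim (eventually_nhdsWithin_of_forall fun y hy => hy.2)

section EssSup

variable {α E : Type*} [LinearOrder α] [TopologicalSpace α] [OrderTopology α] [DenselyOrdered α]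
  [SecondCountableTopology α] [MeasurableSpace α] {μ : Measure α} [μ.IsOpenPosMeasure]
  [NullSingletonClass μ] [NormedAddCommGroup E] {h : α → E}

theorem iSup_enorm_eq_eLpNorm_top_of_tendsto_nhdsGT [NoMaxOrder α] {R : α → E}
    (hR : ∀ x, Tendsto h (𝓝[>] x) (𝓝 (R x))) : ⨆ x, ‖R x‖ₑ = eLpNorm h ⊤ μ := by
  refine le_antisymm (iSup_le fun x => enorm_le_eLpNorm_top_of_tendsto_nhdsWithin isOpen_Ioi
    (by simp) (hR x)) ?_
  have hae : h =ᵐ[μ] R := (countable_setOf_ne_of_tendsto_nhdsGT hR).measure_zero μ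
  rw [eLpNorm_congr_ae hae, eLpNorm_exponent_top]
  exact essSup_le_iSup

theorem iSup_enorm_eq_eLpNorm_top_of_tendsto_nhdsLT [NoMinOrder α] {L : α → E}
    (hL : ∀ x, Tendsto h (𝓝[<] x) (𝓝 (L x))) : ⨆ x, ‖L x‖ₑ = eLpNorm h ⊤ μ := by
  refine le_antisymm (iSup_le fun x => enorm_le_eLpNorm_top_of_tendsto_nhdsWithin isOpen_Iio
    (by simp) (hL x)) ?_
  have hae : h =ᵐ[μ] L := (countable_setOf_ne_of_tendsto_nhdsLT hL).measure_zero μ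
  rw [eLpNorm_congr_ae hae, eLpNorm_exponent_top]
  exact essSup_le_iSup

end EssSup

theorem sup_of_limit_differences_eq_essSup_general (f g : ℝ → ℝ)
    (Lf Rf Lg Rg : ℝ → ℝ)
    (hLf : ∀ t, Tendsto f (𝓝[<] t) (𝓝 (Lf t)))
    (hRf : ∀ t, Tendsto f (𝓝[>] t) (𝓝 (Rf t)))
    (hLg : ∀ t, Tendsto g (𝓝[<] t) (𝓝 (Lg t)))
    (hRg : ∀ t, Tendsto g (𝓝[>] t) (𝓝 (Rg t))) :
    (⨆ t : ℝ, ENNReal.ofReal |Rf t - Rg t|) =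
        eLpNorm (fun t => f t - g t) ⊤ (volume : Measure ℝ) ∧
      (⨆ t : ℝ, ENNReal.ofReal |Lf t - Lg t|) =
        eLpNorm (fun t => f t - g t) ⊤ (volume : Measure ℝ) := by
  simp only [← Real.enorm_eq_ofReal_abs]
  exact ⟨iSup_enorm_eq_eLpNorm_top_of_tendsto_nhdsGT fun t => (hRf t).sub (hRg t),
    iSup_enorm_eq_eLpNorm_top_of_tendsto_nhdsLT fun t => (hLf t).sub (hLg t)⟩

/-- For regulated `f, g : ℝ → ℝ`, the supremum over `t` of `|f(t+) − g(t+)|`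
equals the essential supremum (`L^∞`-norm) of `|f − g|` w.r.t. Lebesgue measure, as an
equality in `[0, ∞]`; and likewise for the left limits.  Here `Rf, Rg` (resp. `Lf, Lg`)
are the functions of right (resp. left) limits of `f` and `g`. -/
theorem sup_of_limit_differences_eq_essSup (f g : ℝ → ℝ)
    (hf : Regulated f) (hg : Regulated g)
    (Lf Rf Lg Rg : ℝ → ℝ)
    (hLf : ∀ t, Tendsto f (𝓝[<] t) (𝓝 (Lf t)))
    (hRf : ∀ t, Tendsto f (𝓝[>] t) (𝓝 (Rf t)))
    (hLg : ∀ t, Tendsto g (𝓝[<] t) (𝓝 (Lg t)))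
    (hRg : ∀ t, Tendsto g (𝓝[>] t) (𝓝 (Rg t))) :
    (⨆ t : ℝ, ENNReal.ofReal |Rf t - Rg t|) =
        eLpNorm (fun t => f t - g t) ⊤ (volume : Measure ℝ) ∧
      (⨆ t : ℝ, ENNReal.ofReal |Lf t - Lg t|) =
        eLpNorm (fun t => f t - g t) ⊤ (volume : Measure ℝ) :=
  sup_of_limit_differences_eq_essSup_general f g Lf Rf Lg Rg hLf hRf hLg hRg
end

section
/- Let a < b be real numbers, let K ≥ 0, and let p : ℝ → ℝ be integrable on (a, b) with respect to Lebesgue measure. Suppose that |∫_a^b p(t) v′(t) dt| ≤ K · sup_{t ∈ [a,b]} |v(t)| for every continuously differentiable function v : ℝ → ℝ. Then there exists a function q : ℝ → ℝ whose total variation over [a, b] is at most K and which satisfies q(t) = p(t) for Lebesgue-almost every t ∈ (a, b). -/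
/-!
Mollify `p`, extended by zero, with bump kernels `ρₙ` shrinking to `0`. Testing the bound against
the step function `∑ ±𝟙_[uᵢ, uᵢ₊₁)` smoothed by `ρₙ` (a `C¹` function bounded by `1`) shows that
every mollification `ρₙ ⋆ p` has variation at most `K` on `ℝ`. By Lebesgue's differentiation
theorem they converge to `p` on a set `S ⊆ (a, b)` of full measure, so by lower semicontinuity of
the variation `p` has variation at most `K` on `S`. As `S` is dense in `[a, b]`, choosing at each
point of `[a, b]` a cluster value of `p` along `S` extends `p|_S` without increasing the variation.
-/

open Set Filter Topology MeasureTheory intervalIntegral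
open ContinuousLinearMap (lsmul)
open scoped Convolution

section Variation

variable {α E : Type*} [LinearOrder α]

theorem eVariationOn_le_of_mapClusterPt [TopologicalSpace α] [OrderClosedTopology α]
    [PseudoEMetricSpace E] {f g : α → E} {s t : Set α}
    (hg : ∀ x ∈ t, MapClusterPt (g x) (𝓝[s] x) f) : eVariationOn g t ≤ eVariationOn f s := by
  refine iSup_le fun ⟨n, u, hu, ut⟩ => ?_
  -- Along `Filter.pi L`, `w x` is a point of `s` near `x` at which `f` is near `g x`,
  -- simultaneously for all `x ∈ t`.
  let L : t → Filter α := fun x => comap f (𝓝 (g x)) ⊓ 𝓝[s] (x : α)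
  have : ∀ x, (L x).NeBot := fun x => neBot_inf_comap_iff_map'.2 (hg x x.2)
  let v : (t → α) → ℕ → α := fun w i => w ⟨u i, ut i⟩
  have hv : ∀ i, Tendsto (fun w => v w i) (Filter.pi L) (L ⟨u i, ut i⟩) := fun i =>
    tendsto_eval_pi L _
  have hv_nhds : ∀ i, Tendsto (fun w => v w i) (Filter.pi L) (𝓝 (u i)) := fun i =>
    (hv i).mono_right (inf_le_right.trans nhdsWithin_le_nhds)
  have hv_f : ∀ i, Tendsto (fun w => f (v w i)) (Filter.pi L) (𝓝 (g (u i))) := fun i =>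
    tendsto_comap_iff.1 ((hv i).mono_right inf_le_left)
  have hsum := tendsto_finsetSum (Finset.range n) fun i _ => (hv_f (i + 1)).edist (hv_f i)
  refine le_of_tendsto hsum ?_
  have hmem : ∀ᶠ w in Filter.pi L, ∀ i ∈ Finset.range (n + 1), v w i ∈ s :=
    (Finset.range (n + 1)).eventually_all.2 fun i _ =>
      (hv i).eventually (mem_inf_of_right self_mem_nhdsWithin)
  have hlt : ∀ᶠ w in Filter.pi L, ∀ i ∈ Finset.range (n + 1), ∀ j ∈ Finset.range (n + 1),
      u i < u j → v w i < v w j :=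
    (Finset.range (n + 1)).eventually_all.2 fun i _ => (Finset.range (n + 1)).eventually_all.2
      fun j _ => by
        by_cases hij : u i < u j
        · exact ((hv_nhds i).eventually_lt (hv_nhds j) hij).mono fun w hw _ => hw
        · exact Eventually.of_forall fun w h => absurd h hij
  filter_upwards [hmem, hlt] with w hws hwlt
  refine eVariationOn.sum_le_of_monotoneOn_Iic (fun i hi j hj hij => ?_) fun i hi =>
    hws i (Finset.mem_range_succ_iff.2 hi)
  rcases (hu hij).eq_or_lt with h | h
  · exact (congrArg w (Subtype.ext h)).le
  · exact (hwlt i (Finset.mem_range_succ_iff.2 hi) j (Finset.mem_range_succ_iff.2 hj) h).le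

theorem BoundedVariationOn.exists_mapClusterPt [TopologicalSpace α] [PseudoMetricSpace E]
    [ProperSpace E] {f : α → E} {s : Set α} (hf : BoundedVariationOn f s) {x : α}
    (hx : x ∈ closure s) : ∃ y, MapClusterPt y (𝓝[s] x) f := by
  have : (𝓝[s] x).NeBot := mem_closure_iff_nhdsWithin_neBot.1 hx
  obtain ⟨c, hc⟩ := Filter.nonempty_of_mem (self_mem_nhdsWithin : s ∈ 𝓝[s] x)
  obtain ⟨y, -, hy⟩ := (isCompact_closedBall (f c) (eVariationOn f s).toReal).exists_mapClusterPt
    (f := 𝓝[s] x) (u := f) (tendsto_principal.2 (eventually_mem_nhdsWithin.mono fun z hz =>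
      Metric.mem_closedBall.2 (hf.dist_le hz hc)))
  exact ⟨y, hy⟩

theorem BoundedVariationOn.exists_eqOn_eVariationOn_le [TopologicalSpace α]
    [OrderClosedTopology α] [PseudoMetricSpace E] [ProperSpace E] {f : α → E} {s t : Set α}
    (hf : BoundedVariationOn f s) (ht : t ⊆ closure s) :
    ∃ g : α → E, EqOn g f s ∧ eVariationOn g t ≤ eVariationOn f s := by
  have : ∀ x, ∃ y, (x ∈ s → y = f x) ∧ (x ∈ closure s → MapClusterPt y (𝓝[s] x) f) := by
    intro x
    by_cases hxs : x ∈ s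
    · exact ⟨f x, fun _ => rfl, fun _ =>
        (tendsto_pure_nhds f x).mapClusterPt.mono (map_mono (pure_le_nhdsWithin hxs))⟩
    by_cases hx : x ∈ closure s
    · obtain ⟨y, hy⟩ := hf.exists_mapClusterPt hx
      exact ⟨y, (absurd · hxs), fun _ => hy⟩
    · exact ⟨f x, fun _ => rfl, (absurd · hx)⟩
  choose g hgf hg using this
  exact ⟨g, hgf, eVariationOn_le_of_mapClusterPt fun x hx => hg x (ht hx)⟩

theorem eVariationOn_le_of_tendsto [PseudoEMetricSpace E] {ι : Type*} {l : Filter ι} [l.NeBot]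
    {F : ι → α → E} {f : α → E} {s : Set α} {C : ENNReal}
    (hF : ∀ x ∈ s, Tendsto (fun i => F i x) l (𝓝 (f x))) (hC : ∀ i, eVariationOn (F i) s ≤ C) :
    eVariationOn f s ≤ C :=
  le_of_forall_lt fun _ hc =>
    let ⟨i, hi⟩ := (eVariationOn.lowerSemicontinuous_aux hF hc).exists
    hi.trans_le (hC i)

end Variation

section Kernel

variable {ρ : ℝ → ℝ}

theorem intervalIntegral_mem_Icc_of_integral_eq_one (hρ0 : 0 ≤ ρ) (hρ1 : ∫ x, ρ x = 1)
    {x y : ℝ} (hxy : x ≤ y) : ∫ t in x..y, ρ t ∈ Icc 0 1 := by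
  refine ⟨intervalIntegral.integral_nonneg hxy fun t _ => hρ0 t, ?_⟩
  rw [intervalIntegral.integral_of_le hxy, ← hρ1]
  exact setIntegral_le_integral (integrable_of_integral_eq_one hρ1) (Eventually.of_forall hρ0)

/-- `v` is the step function `∑ εᵢ 𝟙_[uᵢ, uᵢ₊₁)` smoothed by the probability density `ρ`. -/
theorem exists_contDiff_abs_le_one_deriv_eq_sum (hρ : Continuous ρ) (hρ0 : 0 ≤ ρ)
    (hρ1 : ∫ x, ρ x = 1) {u : ℕ → ℝ} (hu : Monotone u) (n : ℕ) {ε : ℕ → ℝ} (hε : ∀ i, |ε i| ≤ 1) :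
    ∃ v : ℝ → ℝ, ContDiff ℝ 1 v ∧ (∀ t, |v t| ≤ 1) ∧
      ∀ t, deriv v t = ∑ i ∈ Finset.range n, ε i * (ρ (u i - t) - ρ (u (i + 1) - t)) := by
  let Φ : ℝ → ℝ := fun y => ∫ t in 0..y, ρ t
  have hΦ : ∀ x y, Φ y - Φ x = ∫ t in x..y, ρ t := fun x y =>
    integral_interval_sub_left (hρ.intervalIntegrable _ _) (hρ.intervalIntegrable _ _)
  have hΦ' : ∀ c t, HasDerivAt (fun t => Φ (c - t)) (-ρ (c - t)) t := fun c t =>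
    (hρ.integral_hasStrictDerivAt 0 (c - t)).hasDerivAt.comp_const_sub c t
  let v' : ℝ → ℝ := fun t => ∑ i ∈ Finset.range n, ε i * (ρ (u i - t) - ρ (u (i + 1) - t))
  let v : ℝ → ℝ := fun t => ∑ i ∈ Finset.range n, ε i * (Φ (u (i + 1) - t) - Φ (u i - t))
  have hv : ∀ t, HasDerivAt v (v' t) t := fun t =>
    (HasDerivAt.fun_sum fun i _ => ((hΦ' (u (i + 1)) t).sub (hΦ' (u i) t)).const_mul (ε i)
      ).congr_deriv (Finset.sum_congr rfl fun i _ => by ring)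
  have hderiv : deriv v = v' := funext fun t => (hv t).deriv
  refine ⟨v, contDiff_one_iff_deriv.2 ⟨fun t => (hv t).differentiableAt, ?_⟩, fun t => ?_,
    fun t => (hv t).deriv⟩
  · rw [hderiv]
    fun_prop
  · have hmem := fun x y (h : x ≤ y) => intervalIntegral_mem_Icc_of_integral_eq_one hρ0 hρ1 h
    have hmono : ∀ i, u i - t ≤ u (i + 1) - t := fun i => by linarith [hu (Nat.le_succ i)]
    calc |v t| ≤ ∑ i ∈ Finset.range n, |ε i * (Φ (u (i + 1) - t) - Φ (u i - t))| :=
          Finset.abs_sum_le_sum_abs _ _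
      _ ≤ ∑ i ∈ Finset.range n, (Φ (u (i + 1) - t) - Φ (u i - t)) := by
          refine Finset.sum_le_sum fun i _ => ?_
          rw [abs_mul, hΦ, abs_of_nonneg (hmem _ _ (hmono i)).1]
          exact mul_le_of_le_one_left (hmem _ _ (hmono i)).1 (hε i)
      _ = ∫ s in (u 0 - t)..(u n - t), ρ s := by
          rw [Finset.sum_range_sub (fun i => Φ (u i - t)), hΦ]
      _ ≤ 1 := (hmem _ _ (by linarith [hu (Nat.zero_le n)])).2

theorem sum_abs_sub_le_of_duality_bound {a b K : ℝ} (hK : 0 ≤ K) {p : ℝ → ℝ}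
    (hp : IntervalIntegrable p volume a b)
    (hbound : ∀ v : ℝ → ℝ, ContDiff ℝ 1 v →
      |∫ t in a..b, p t * deriv v t| ≤ K * sSup ((fun t => |v t|) '' Icc a b))
    (hρ : Continuous ρ) (hρ0 : 0 ≤ ρ) (hρ1 : ∫ x, ρ x = 1) {u : ℕ → ℝ} (hu : Monotone u)
    (n : ℕ) :
    ∑ i ∈ Finset.range n, |(∫ t in a..b, p t * ρ (u (i + 1) - t)) - ∫ t in a..b, p t * ρ (u i - t)|
      ≤ K := by
  set c : ℝ → ℝ := fun x => ∫ t in a..b, p t * ρ (x - t)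
  have hc : ∀ x, IntervalIntegrable (fun t => p t * ρ (x - t)) volume a b := fun x =>
    hp.mul_continuousOn (by fun_prop)
  let ε : ℕ → ℝ := fun i => SignType.sign (c (u i) - c (u (i + 1)))
  obtain ⟨v, hv, hv1, hv'⟩ := exists_contDiff_abs_le_one_deriv_eq_sum hρ hρ0 hρ1 hu n (ε := ε)
    fun i => by simp only [ε]; cases SignType.sign (c (u i) - c (u (i + 1))) <;> simp
  have hint : ∫ t in a..b, p t * deriv v t =
      ∑ i ∈ Finset.range n, ε i * (c (u i) - c (u (i + 1))) := by
    simp_rw [hv', Finset.mul_sum]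
    rw [integral_finsetSum fun i _ => hp.mul_continuousOn (by fun_prop)]
    refine Finset.sum_congr rfl fun i _ => ?_
    simp only [c]
    rw [← integral_sub (hc _) (hc _), ← intervalIntegral.integral_const_mul]
    exact integral_congr fun t _ => by ring
  have hsup : sSup ((fun t => |v t|) '' Icc a b) ≤ 1 :=
    Real.sSup_le (by rintro _ ⟨t, -, rfl⟩; exact hv1 t) zero_le_one
  calc ∑ i ∈ Finset.range n, |c (u (i + 1)) - c (u i)|
      = ∫ t in a..b, p t * deriv v t := by
        rw [hint]
        exact Finset.sum_congr rfl fun i _ => by rw [abs_sub_comm, sign_mul_self]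
    _ ≤ K * sSup ((fun t => |v t|) '' Icc a b) := (le_abs_self _).trans (hbound v hv)
    _ ≤ K := mul_le_of_le_one_right hK hsup

theorem convolution_indicator_Ioo_eq_intervalIntegral {a b : ℝ} (hab : a ≤ b) (p : ℝ → ℝ) (x : ℝ) :
    (ρ ⋆[lsmul ℝ ℝ, volume] (Ioo a b).indicator p) x =
      ∫ t in a..b, p t * ρ (x - t) := by
  rw [convolution_eq_swap, integral_of_le hab, integral_Ioc_eq_integral_Ioo,
    ← MeasureTheory.integral_indicator measurableSet_Ioo]
  congr 1 with t
  by_cases ht : t ∈ Ioo a b <;> simp [ht, mul_comm]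

theorem eVariationOn_convolution_le_of_duality_bound {a b K : ℝ} (hab : a ≤ b) (hK : 0 ≤ K)
    {p : ℝ → ℝ} (hp : IntegrableOn p (Ioo a b))
    (hbound : ∀ v : ℝ → ℝ, ContDiff ℝ 1 v →
      |∫ t in a..b, p t * deriv v t| ≤ K * sSup ((fun t => |v t|) '' Icc a b))
    (hρ : Continuous ρ) (hρ0 : 0 ≤ ρ) (hρ1 : ∫ x, ρ x = 1) :
    eVariationOn (ρ ⋆[lsmul ℝ ℝ, volume] (Ioo a b).indicator p) univ ≤
      ENNReal.ofReal K := by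
  refine iSup_le fun ⟨n, u, hu, _⟩ => ?_
  simp only [edist_dist, Real.dist_eq, convolution_indicator_Ioo_eq_intervalIntegral hab]
  rw [← ENNReal.ofReal_sum_of_nonneg fun i _ => abs_nonneg _]
  exact ENNReal.ofReal_le_ofReal <| sum_abs_sub_le_of_duality_bound hK
    ((intervalIntegrable_iff_integrableOn_Ioo_of_le hab).2 hp) hbound hρ hρ0 hρ1 hu n

end Kernel

noncomputable def shrinkingBump (n : ℕ) : ContDiffBump (0 : ℝ) where
  rIn := 1 / (n + 1)
  rOut := 2 / (n + 1)
  rIn_pos := by positivity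
  rIn_lt_rOut := by gcongr; norm_num

theorem ae_tendsto_shrinkingBump_convolution {g : ℝ → ℝ} (hg : LocallyIntegrable g) :
    ∀ᵐ x, Tendsto (fun n => ((shrinkingBump n).normed volume ⋆[lsmul ℝ ℝ, volume] g) x) atTop
      (𝓝 (g x)) := by
  refine ContDiffBump.ae_convolution_tendsto_right_of_locallyIntegrable (K := 2) ?_
    (Eventually.of_forall fun n => le_of_eq ?_) hg
  · simpa [shrinkingBump, div_eq_mul_inv] using
      tendsto_one_div_add_atTop_nhds_zero_nat.const_mul (2 : ℝ)
  · simp [shrinkingBump, div_eq_mul_inv]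

/-- If `p ∈ L¹(a,b)` satisfies `|∫_a^b p v′| ≤ K ⬝ sup_{[a,b]} |v|` for every
`C¹` function `v`, then `p` coincides a.e. on `(a,b)` with a function of total variation
at most `K` on `[a,b]`. -/
theorem bv_representative_from_duality_bound (a b : ℝ) (hab : a < b)
    (K : ℝ) (hK : 0 ≤ K) (p : ℝ → ℝ)
    (hp : IntegrableOn p (Ioo a b) (volume : Measure ℝ))
    (hbound : ∀ v : ℝ → ℝ, ContDiff ℝ 1 v →
      |∫ t in a..b, p t * deriv v t| ≤ K * sSup ((fun t => |v t|) '' Icc a b)) :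
    ∃ q : ℝ → ℝ, eVariationOn q (Icc a b) ≤ ENNReal.ofReal K ∧
      ∀ᵐ t ∂((volume : Measure ℝ).restrict (Ioo a b)), q t = p t := by
  let P := (Ioo a b).indicator p
  let F : ℕ → ℝ → ℝ := fun n => (shrinkingBump n).normed volume ⋆[lsmul ℝ ℝ, volume] P
  have hF : ∀ n, eVariationOn (F n) univ ≤ ENNReal.ofReal K := fun n =>
    eVariationOn_convolution_le_of_duality_bound hab.le hK hp hbound
      (ContDiffBump.continuous_normed _) (ContDiffBump.nonneg_normed _)
      (ContDiffBump.integral_normed _)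
  have hconv : ∀ᵐ x, Tendsto (fun n => F n x) atTop (𝓝 (P x)) :=
    ae_tendsto_shrinkingBump_convolution
      (hp.integrable_indicator measurableSet_Ioo).locallyIntegrable
  let S := Ioo a b ∩ {x | Tendsto (fun n => F n x) atTop (𝓝 (P x))}
  have hPS : eVariationOn P S ≤ ENNReal.ofReal K :=
    eVariationOn_le_of_tendsto (fun x hx => hx.2) fun n =>
      (eVariationOn.mono _ (subset_univ S)).trans (hF n)
  have hS : Icc a b ⊆ closure S := by
    rw [← closure_Ioo hab.ne]
    exact closure_minimal ((Measure.dense_of_ae hconv).open_subset_closure_inter isOpen_Ioo)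
      isClosed_closure
  obtain ⟨q, hqP, hq⟩ := BoundedVariationOn.exists_eqOn_eVariationOn_le
    (hPS.trans_lt ENNReal.ofReal_lt_top).ne hS
  refine ⟨q, hq.trans hPS, ?_⟩
  filter_upwards [ae_restrict_mem measurableSet_Ioo, ae_restrict_of_ae hconv] with x hx hxF
  exact (hqP ⟨hx, hxF⟩).trans (indicator_of_mem hx p)
end

section
/- Let (Ω, μ) be a σ-finite measure space, let p : Ω → ℝ be μ-integrable, let y : Ω → ℝ be measurable, and let z : ℝ → ℝ be Lebesgue-integrable. Define P : ℝ → ℝ by P(s) = ∫_{{x : y(x) ≥ s}} p dμ for s ≥ 0 and P(s) = −∫_{{x : y(x) ≤ s}} p dμ for s < 0. Then ∫_Ω g_z(y(x)) · p(x) dμ(x) = ∫_ℝ z(s) P(s) ds. -/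
open Set MeasureTheory

/-!
Both sides are iterated integrals of `z(s) K(y(x), s) p(x)` over `Ω × ℝ`, where
`K = signedIntervalIndicator`, so that `K(t, ·)` is the signed indicator of the oriented interval
from `0` to `t`: integrating in `s` first gives `g_z(y(x)) p(x)`, integrating in `x` first gives
`z(s) P(s)`. The integrand is dominated by `|z(s)| |p(x)|`, so Fubini applies.
-/

noncomputable def signedIntervalIndicator (t s : ℝ) : ℝ :=
  if 0 ≤ s then (if s ≤ t then 1 else 0) else -(if t ≤ s then 1 else 0)

lemma abs_signedIntervalIndicator_le_one (t s : ℝ) : |signedIntervalIndicator t s| ≤ 1 := by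
  unfold signedIntervalIndicator
  split_ifs <;> simp

lemma measurable_signedIntervalIndicator : Measurable (Function.uncurry signedIntervalIndicator) :=
  Measurable.ite (measurableSet_le measurable_const measurable_snd)
    (Measurable.ite (measurableSet_le measurable_snd measurable_fst) measurable_const
      measurable_const)
    (Measurable.ite (measurableSet_le measurable_fst measurable_snd) measurable_const
      measurable_const).neg

lemma integral_mul_signedIntervalIndicator (z : ℝ → ℝ) (t : ℝ) :
    ∫ s, z s * signedIntervalIndicator t s = ∫ s in (0:ℝ)..t, z s := by
  rcases le_or_gt 0 t with ht | ht
  · have hK : (fun s => z s * signedIntervalIndicator t s) = (Icc 0 t).indicator z := by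
      ext s
      simp only [signedIntervalIndicator, indicator_apply, mem_Icc]
      split_ifs <;> grind
    rw [hK, integral_indicator measurableSet_Icc, intervalIntegral.integral_of_le ht,
      integral_Icc_eq_integral_Ioc]
  · have hK : (fun s => z s * signedIntervalIndicator t s) = -(Ico t 0).indicator z := by
      ext s
      simp only [signedIntervalIndicator, Pi.neg_apply, indicator_apply, mem_Ico]
      split_ifs <;> grind
    rw [hK, integral_neg', integral_indicator measurableSet_Ico,
      intervalIntegral.integral_of_ge ht.le, integral_Ico_eq_integral_Ioo,
      integral_Ioc_eq_integral_Ioo]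

lemma integral_signedIntervalIndicator_mul {Ω : Type*} [MeasurableSpace Ω] (μ : Measure Ω)
    (p y : Ω → ℝ) (hy : Measurable y) (s : ℝ) :
    ∫ x, signedIntervalIndicator (y x) s * p x ∂μ =
      if 0 ≤ s then ∫ x in {x | s ≤ y x}, p x ∂μ else -∫ x in {x | y x ≤ s}, p x ∂μ := by
  by_cases h0 : 0 ≤ s
  · simp only [signedIntervalIndicator, h0, if_true, ite_mul, one_mul, zero_mul]
    rw [← integral_indicator (measurableSet_le measurable_const hy)]
    rfl
  · simp only [signedIntervalIndicator, h0, if_false, neg_mul, ite_mul, one_mul, zero_mul,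
      integral_neg]
    rw [← integral_indicator (measurableSet_le hy measurable_const)]
    rfl

/-- Fubini-type identity `∫_Ω g_z(y(x)) p(x) dμ(x) = ∫_ℝ z(s) P(s) ds`, where
`P(s) = ∫_{{y ≥ s}} p dμ` for `s ≥ 0` and `P(s) = −∫_{{y ≤ s}} p dμ` for `s < 0`. -/
theorem integral_gz_composition_eq_integral_levelsets {Ω : Type*} [MeasurableSpace Ω]
    (μ : Measure Ω) [SigmaFinite μ] (p : Ω → ℝ) (hp : Integrable p μ)
    (y : Ω → ℝ) (hy : Measurable y)
    (z : ℝ → ℝ) (hz : Integrable z (volume : Measure ℝ)) :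
    ∫ x, (∫ s in (0:ℝ)..(y x), z s) * p x ∂μ =
      ∫ s, z s *
        (if 0 ≤ s then ∫ x in {x | s ≤ y x}, p x ∂μ
          else -∫ x in {x | y x ≤ s}, p x ∂μ) := by
  have hK : Measurable fun q : Ω × ℝ => signedIntervalIndicator (y q.1) q.2 :=
    measurable_signedIntervalIndicator.comp ((hy.comp measurable_fst).prodMk measurable_snd)
  have hF : Integrable (Function.uncurry fun x s => z s * signedIntervalIndicator (y x) s * p x)
      (μ.prod volume) :=
    ((hp.mul_prod hz).bdd_mul hK.aestronglyMeasurable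
      (.of_forall fun q => abs_signedIntervalIndicator_le_one _ _)).congr
      (.of_forall fun q => by simp only [Function.uncurry]; ring)
  calc ∫ x, (∫ s in (0:ℝ)..(y x), z s) * p x ∂μ
      = ∫ x, ∫ s, z s * signedIntervalIndicator (y x) s * p x ∂volume ∂μ := by
        simp_rw [integral_mul_const, integral_mul_signedIntervalIndicator]
    _ = ∫ s, ∫ x, z s * signedIntervalIndicator (y x) s * p x ∂μ := integral_integral_swap hF
    _ = _ := by
        simp_rw [mul_assoc, integral_const_mul, integral_signedIntervalIndicator_mul μ p y hy]
end

section
/- Let (Ω, μ) be a σ-finite measure space, let p : Ω → ℝ be μ-integrable, let y : Ω → ℝ be measurable, and let r > 0. Define P : [−r, r] → ℝ by P(s) = ∫_{{x : y(x) ≥ s}} p dμ for s ∈ [0, r] and P(s) = −∫_{{x : y(x) ≤ s}} p dμ for s ∈ [−r, 0). Then for every continuously differentiable function v : ℝ → ℝ one has ∫_{−r}^r v′(s) P(s) ds = −v(0) ∫_Ω p dμ + ∫_Ω v( max(−r, min(r, y(x))) ) p(x) dμ(x). -/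
open Set Filter Topology MeasureTheory intervalIntegral

/-!
Write `T = max (-r) (min r y)`. For `s ≠ 0` in `[-r, r]` the level-set integral `P(s)` is
`∫ K(T x, s) p(x) dμ`, where `K(t, ·)` is the signed indicator of the interval between `0` and `t`,
so that `∫ v' K(t, ·) = v t - v 0`. Fubini then turns `∫ v' P` into `∫ (v (T x) - v 0) p(x) dμ`.
-/

/-- The half-open conventions match the superlevel sets `{s ≤ y}` for `s > 0` and the sublevel
sets `{y ≤ s}` for `s < 0`. -/
noncomputable def levelKernel (t s : ℝ) : ℝ := (Ioc 0 t).indicator 1 s - (Ico t 0).indicator 1 s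

namespace levelKernel

lemma of_pos {t s : ℝ} (hs : 0 < s) : levelKernel t s = {s | s ≤ t}.indicator 1 s := by
  have : s ∉ Ico t 0 := fun h => h.2.not_gt hs
  by_cases hst : s ≤ t <;> simp [levelKernel, hs, hst, this]

lemma of_neg {t s : ℝ} (hs : s < 0) : levelKernel t s = -{s | t ≤ s}.indicator 1 s := by
  have : s ∉ Ioc 0 t := fun h => h.1.not_gt hs
  by_cases hst : t ≤ s <;> simp [levelKernel, hs, hst, this]

lemma abs_le_one (t s : ℝ) : |levelKernel t s| ≤ 1 := by
  by_cases h₁ : s ∈ Ioc 0 t <;> by_cases h₂ : s ∈ Ico t 0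
  · exact absurd (h₁.1.trans h₂.2) (lt_irrefl 0)
  all_goals simp [levelKernel, h₁, h₂]

lemma eq_zero_of_notMem_uIcc {t s : ℝ} (hs : s ∉ uIcc 0 t) : levelKernel t s = 0 := by
  have h₁ : s ∉ Ioc 0 t := fun h => hs (Ioc_subset_Icc_self.trans Icc_subset_uIcc h)
  have h₂ : s ∉ Ico t 0 := fun h => hs (Ico_subset_Icc_self.trans Icc_subset_uIcc' h)
  simp [levelKernel, h₁, h₂]

lemma measurable_uncurry : Measurable (Function.uncurry levelKernel) := by
  have h₁ : MeasurableSet {z : ℝ × ℝ | z.2 ∈ Ioc 0 z.1} :=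
    (measurableSet_lt measurable_const measurable_snd).inter
      (measurableSet_le measurable_snd measurable_fst)
  have h₂ : MeasurableSet {z : ℝ × ℝ | z.2 ∈ Ico z.1 0} :=
    (measurableSet_le measurable_fst measurable_snd).inter
      (measurableSet_lt measurable_snd measurable_const)
  exact (measurable_const.indicator h₁).sub (measurable_const.indicator h₂)

lemma integral_mul (f : ℝ → ℝ) (t : ℝ) : ∫ s, f s * levelKernel t s = ∫ s in 0..t, f s := by
  rcases le_or_gt 0 t with ht | ht
  · have : (fun s => f s * levelKernel t s) = (Ioc 0 t).indicator f := by
      ext s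
      by_cases hs : s ∈ Ioc 0 t <;> simp [levelKernel, hs, Ico_eq_empty_of_le ht]
    rw [this, MeasureTheory.integral_indicator measurableSet_Ioc, integral_of_le ht]
  · have : (fun s => f s * levelKernel t s) = fun s => -(Ico t 0).indicator f s := by
      ext s
      by_cases hs : s ∈ Ico t 0 <;> simp [levelKernel, hs, Ioc_eq_empty_of_le ht.le]
    rw [this, MeasureTheory.integral_neg, MeasureTheory.integral_indicator measurableSet_Ico,
      setIntegral_congr_set Ico_ae_eq_Ioc, integral_of_ge ht.le]

lemma setIntegral_Icc_mul {a b t : ℝ} (f : ℝ → ℝ) (h₀ : (0 : ℝ) ∈ Icc a b) (ht : t ∈ Icc a b) :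
    ∫ s in Icc a b, f s * levelKernel t s = ∫ s in 0..t, f s := by
  rw [setIntegral_eq_integral_of_forall_compl_eq_zero fun s hs => ?_, integral_mul]
  rw [eq_zero_of_notMem_uIcc fun h => hs (uIcc_subset_Icc h₀ ht h), mul_zero]

end levelKernel

lemma le_max_min_iff {α : Type*} [LinearOrder α] {a b s t : α} (has : a < s) (hsb : s ≤ b) :
    s ≤ max a (min b t) ↔ s ≤ t := by
  simp only [le_max_iff, le_min_iff, has.not_ge, false_or, hsb, true_and]

lemma max_min_le_iff {α : Type*} [LinearOrder α] {a b s t : α} (has : a ≤ s) (hsb : s < b) :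
    max a (min b t) ≤ s ↔ t ≤ s := by
  simp only [max_le_iff, min_le_iff, hsb.not_ge, false_or, has, true_and]

section LevelSets

variable {Ω : Type*} [MeasurableSpace Ω] {μ : Measure Ω} {p T : Ω → ℝ} {s : ℝ}

lemma integral_levelKernel_mul_of_pos (hT : Measurable T) (hs : 0 < s) :
    ∫ x, levelKernel (T x) s * p x ∂μ = ∫ x in {x | s ≤ T x}, p x ∂μ := by
  rw [← MeasureTheory.integral_indicator (measurableSet_le measurable_const hT)]
  congr 1 with x
  by_cases h : s ≤ T x <;> simp [levelKernel.of_pos hs, h]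

lemma integral_levelKernel_mul_of_neg (hT : Measurable T) (hs : s < 0) :
    ∫ x, levelKernel (T x) s * p x ∂μ = -∫ x in {x | T x ≤ s}, p x ∂μ := by
  rw [← MeasureTheory.integral_indicator (measurableSet_le hT measurable_const),
    ← MeasureTheory.integral_neg]
  congr 1 with x
  by_cases h : T x ≤ s <;> simp [levelKernel.of_neg hs, h]

lemma levelSetIntegral_eq_integral_levelKernel_mul {y : Ω → ℝ} {r : ℝ} (hy : Measurable y)
    (hs : s ∈ Icc (-r) r) (hs₀ : s ≠ 0) :
    (if 0 ≤ s then ∫ x in {x | s ≤ y x}, p x ∂μ else -∫ x in {x | y x ≤ s}, p x ∂μ) =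
      ∫ x, levelKernel (max (-r) (min r (y x))) s * p x ∂μ := by
  have hT : Measurable fun x => max (-r) (min r (y x)) :=
    measurable_const.max (measurable_const.min hy)
  rcases hs₀.lt_or_gt with hneg | hpos
  · rw [if_neg hneg.not_ge, integral_levelKernel_mul_of_neg hT hneg]
    simp only [max_min_le_iff hs.1 (show s < r by linarith [hs.1])]
  · rw [if_pos hpos.le, integral_levelKernel_mul_of_pos hT hpos]
    simp only [le_max_min_iff (show -r < s by linarith [hs.2]) hs.2]

end LevelSets

theorem integral_mul_integral_bounded_mul_comm {α β : Type*} [MeasurableSpace α]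
    [MeasurableSpace β] {ν : Measure α} {μ : Measure β} [SFinite ν] [SFinite μ]
    {f : α → ℝ} {p : β → ℝ} {k : α → β → ℝ} (hf : Integrable f ν) (hp : Integrable p μ)
    (hk : Measurable (Function.uncurry k)) (hk₁ : ∀ s x, |k s x| ≤ 1) :
    ∫ s, f s * ∫ x, k s x * p x ∂μ ∂ν = ∫ x, (∫ s, f s * k s x ∂ν) * p x ∂μ := by
  have hint : Integrable (Function.uncurry fun s x => f s * (k s x * p x)) (ν.prod μ) := by
    refine ((hf.mul_prod hp).bdd_mul hk.aestronglyMeasurable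
      (ae_of_all _ fun z => hk₁ z.1 z.2)).congr (ae_of_all _ fun z => ?_)
    simp only [Function.uncurry]
    ring
  simp_rw [← MeasureTheory.integral_const_mul, integral_integral_swap hint,
    ← MeasureTheory.integral_mul_const, mul_assoc]

/-- For `C¹` test functions `v`,
`∫_{−r}^r v′(s) P(s) ds = −v(0) ∫_Ω p dμ + ∫_Ω v([y]_{−r}^r) p dμ`, where
`P(s) = ∫_{{y ≥ s}} p dμ` for `s ∈ [0,r]` and `P(s) = −∫_{{y ≤ s}} p dμ` for `s ∈ [−r,0)`,
and `[y]_{−r}^r = max(−r, min(r, y))` is the truncation of `y` to `[−r, r]`. -/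
theorem integration_by_parts_levelset_integral {Ω : Type*} [MeasurableSpace Ω]
    (μ : Measure Ω) [SigmaFinite μ] (p : Ω → ℝ) (hp : Integrable p μ)
    (y : Ω → ℝ) (hy : Measurable y) (r : ℝ) (hr : 0 < r)
    (v : ℝ → ℝ) (hv : ContDiff ℝ 1 v) :
    ∫ s in (-r)..r, deriv v s *
        (if 0 ≤ s then ∫ x in {x | s ≤ y x}, p x ∂μ
          else -∫ x in {x | y x ≤ s}, p x ∂μ) =
      -(v 0) * (∫ x, p x ∂μ) + ∫ x, v (max (-r) (min r (y x))) * p x ∂μ := by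
  set T : Ω → ℝ := fun x => max (-r) (min r (y x))
  have hT : Measurable T := measurable_const.max (measurable_const.min hy)
  have hTmem : ∀ x, T x ∈ Icc (-r) r := fun x =>
    ⟨le_max_left _ _, max_le (by linarith) (min_le_left _ _)⟩
  have hv' : Continuous (deriv v) := hv.continuous_deriv le_rfl
  have ftc : ∀ t, ∫ s in 0..t, deriv v s = v t - v 0 := fun t =>
    integral_deriv_eq_sub (fun _ _ => (hv.differentiable one_ne_zero).differentiableAt)
      (hv'.intervalIntegrable _ _)
  obtain ⟨C, hC⟩ := isCompact_Icc.exists_bound_of_continuousOn (s := Icc (-r) r)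
    hv.continuous.continuousOn
  have hvT : Integrable (fun x => v (T x) * p x) μ :=
    hp.bdd_mul (hv.continuous.measurable.comp hT).aestronglyMeasurable
      (ae_of_all _ fun x => hC _ (hTmem x))
  calc _ = ∫ s in Icc (-r) r, deriv v s * ∫ x, levelKernel (T x) s * p x ∂μ := by
        rw [integral_of_le (by linarith), ← integral_Icc_eq_integral_Ioc]
        refine integral_congr_ae ?_
        filter_upwards [ae_restrict_mem measurableSet_Icc,
          ae_restrict_of_ae (Measure.ae_ne volume 0)] with s hs hs₀
        rw [levelSetIntegral_eq_integral_levelKernel_mul hy hs hs₀]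
    _ = ∫ x, (v (T x) - v 0) * p x ∂μ := by
        rw [integral_mul_integral_bounded_mul_comm (k := fun s x => levelKernel (T x) s)
          hv'.integrableOn_Icc hp
          (levelKernel.measurable_uncurry.comp ((hT.comp measurable_snd).prodMk measurable_fst))
          fun _ _ => levelKernel.abs_le_one _ _]
        simp_rw [levelKernel.setIntegral_Icc_mul _ ⟨by linarith, hr.le⟩ (hTmem _), ftc]
    _ = _ := by
        simp_rw [sub_mul]
        rw [MeasureTheory.integral_sub hvT (hp.const_mul _), MeasureTheory.integral_const_mul]
        ring
end

section
/- Let (Ω, μ) be a measure space, let u : Ω → ℝ be measurable with u ≥ 0 μ-almost everywhere, and let w : Ω → ℝ be square-integrable with respect to μ. For ε > 0 set Θ_ε² := ∫_Ω min(u/ε, w) · w dμ and set Θ₀² := ∫_Ω ( w·𝟙_{{u>0}} + min(0, w)·𝟙_{{u=0}} )² dμ. Then: (i) 0 ≤ Θ_{ε₁}² ≤ Θ_{ε₂}² ≤ Θ₀² for all ε₁ ≥ ε₂ > 0; (ii) Θ_ε² → Θ₀² as ε → 0 from the right. -/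
/-!
For `u ≥ 0`, the integrand `min (u/ε) w * w` is nonnegative, bounded by `w²`, nonincreasing
in `ε`, and as `ε → 0⁺` it is eventually `w²` where `u > 0` and constantly `min(0,w)²` where `u = 0`.
Dominated convergence gives `Θ_ε² → Θ₀²`; monotonicity then places `Θ₀²` above every
`Θ_ε²`.
-/

open Set Filter Topology MeasureTheory

theorem AntitoneOn.le_of_tendsto_nhdsGT {f : ℝ → ℝ} {a L x : ℝ} (hf : AntitoneOn f (Ioi a))
    (hL : Tendsto f (𝓝[>] a) (𝓝 L)) (hx : a < x) : f x ≤ L :=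
  ge_of_tendsto hL <| mem_of_superset (Ioo_mem_nhdsGT hx) fun _ ht => hf ht.1 hx ht.2.le

section Pointwise

variable {a b ε : ℝ}

theorem min_div_mul_self_nonneg (ha : 0 ≤ a) (hε : 0 ≤ ε) : 0 ≤ min (a / ε) b * b := by
  rcases le_total b 0 with hb | hb
  · rw [min_eq_right (hb.trans (div_nonneg ha hε))]
    exact mul_self_nonneg b
  · exact mul_nonneg (le_min (div_nonneg ha hε) hb) hb

theorem min_div_mul_self_le_sq (ha : 0 ≤ a) (hε : 0 ≤ ε) : min (a / ε) b * b ≤ b ^ 2 := by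
  rcases le_total b 0 with hb | hb
  · rw [min_eq_right (hb.trans (div_nonneg ha hε)), sq]
  · rw [sq]
    exact mul_le_mul_of_nonneg_right (min_le_right _ _) hb

theorem antitoneOn_min_div_mul_self (ha : 0 ≤ a) :
    AntitoneOn (fun ε => min (a / ε) b * b) (Ioi 0) := by
  intro ε₁ hε₁ ε₂ _ hle
  rcases le_total b 0 with hb | hb
  · simp only [min_eq_right (hb.trans (div_nonneg ha (le_of_lt hε₁))),
      min_eq_right (hb.trans (div_nonneg ha (hε₁.out.le.trans hle))), le_refl]
  · exact mul_le_mul_of_nonneg_right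
      (min_le_min_right _ (div_le_div_of_nonneg_left ha hε₁ hle)) hb

theorem tendsto_min_div_mul_self_of_pos (ha : 0 < a) :
    Tendsto (fun ε => min (a / ε) b * b) (𝓝[>] 0) (𝓝 (b ^ 2)) := by
  have hδ : 0 < a / (|b| + 1) := by positivity
  refine tendsto_const_nhds.congr' ?_
  filter_upwards [Ioo_mem_nhdsGT hδ] with ε ⟨hε, hεδ⟩
  have hb : b ≤ a / ε := by
    rw [lt_div_iff₀ (by positivity)] at hεδ
    rw [le_div_iff₀ hε]
    nlinarith [le_abs_self b, abs_nonneg b]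
  rw [min_eq_right hb, sq]

theorem min_zero_div_mul_self (b ε : ℝ) : min (0 / ε) b * b = min 0 b ^ 2 := by
  rcases le_total b 0 with hb | hb
  · simp [min_eq_right hb, sq]
  · simp [min_eq_left hb]

end Pointwise

section Integral

variable {Ω : Type*} [MeasurableSpace Ω] {μ : Measure Ω} {u w : Ω → ℝ}

theorem aestronglyMeasurable_min_div_mul_self (hu : AEMeasurable u μ) (hw : AEMeasurable w μ)
    (ε : ℝ) : AEStronglyMeasurable (fun x => min (u x / ε) (w x) * w x) μ :=
  (((hu.div_const ε).min hw).mul hw).aestronglyMeasurable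

theorem integrable_min_div_mul_self (hu : AEMeasurable u μ) (hnn : ∀ᵐ x ∂μ, 0 ≤ u x)
    (hw : MemLp w 2 μ) {ε : ℝ} (hε : 0 ≤ ε) :
    Integrable (fun x => min (u x / ε) (w x) * w x) μ := by
  refine hw.integrable_sq.mono'
    (aestronglyMeasurable_min_div_mul_self hu hw.aestronglyMeasurable.aemeasurable ε) ?_
  filter_upwards [hnn] with x hx
  rw [Real.norm_of_nonneg (min_div_mul_self_nonneg hx hε)]
  exact min_div_mul_self_le_sq hx hε

theorem antitoneOn_integral_min_div_mul_self (hu : AEMeasurable u μ)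
    (hnn : ∀ᵐ x ∂μ, 0 ≤ u x) (hw : MemLp w 2 μ) :
    AntitoneOn (fun ε => ∫ x, min (u x / ε) (w x) * w x ∂μ) (Ioi 0) := by
  intro ε₁ hε₁ ε₂ hε₂ hle
  refine integral_mono_ae (integrable_min_div_mul_self hu hnn hw (le_of_lt hε₂))
    (integrable_min_div_mul_self hu hnn hw (le_of_lt hε₁)) ?_
  filter_upwards [hnn] with x hx
  exact antitoneOn_min_div_mul_self hx hε₁ hε₂ hle

theorem tendsto_integral_min_div_mul_self (hu : AEMeasurable u μ)
    (hnn : ∀ᵐ x ∂μ, 0 ≤ u x) (hw : MemLp w 2 μ) :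
    Tendsto (fun ε : ℝ => ∫ x, min (u x / ε) (w x) * w x ∂μ) (𝓝[>] 0)
      (𝓝 (∫ x, (w x * ({x | 0 < u x}.indicator (fun _ => (1:ℝ)) x) +
        min 0 (w x) * ({x | u x = 0}.indicator (fun _ => (1:ℝ)) x)) ^ 2 ∂μ)) := by
  refine tendsto_integral_filter_of_dominated_convergence (fun x => w x ^ 2)
    (Eventually.of_forall <|
      aestronglyMeasurable_min_div_mul_self hu hw.aestronglyMeasurable.aemeasurable)
    ?_ hw.integrable_sq ?_
  · filter_upwards [self_mem_nhdsWithin] with ε (hε : 0 < ε)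
    filter_upwards [hnn] with x hx
    rw [Real.norm_of_nonneg (min_div_mul_self_nonneg hx hε.le)]
    exact min_div_mul_self_le_sq hx hε.le
  · filter_upwards [hnn] with x hx
    rcases hx.lt_or_eq with hpos | hzero
    · simpa [indicator_apply, hpos, hpos.ne'] using tendsto_min_div_mul_self_of_pos hpos
    · simp only [← hzero, min_zero_div_mul_self, indicator_apply, mem_ofPred_eq, lt_irrefl,
        if_true, if_false, mul_zero, mul_one, zero_add]
      exact tendsto_const_nhds

end Integral

/-- Properties of the stationarity measures
`Θ_ε² = ∫ min(u/ε, w) w dμ` and `Θ₀² = ∫ (w 𝟙_{u>0} + min(0,w) 𝟙_{u=0})² dμ`: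
monotonicity `0 ≤ Θ_{ε₁}² ≤ Θ_{ε₂}² ≤ Θ₀²` for `ε₁ ≥ ε₂ > 0` and convergence
`Θ_ε² → Θ₀²` as `ε → 0⁺`. -/
theorem stationarity_measure_properties {Ω : Type*} [MeasurableSpace Ω]
    (μ : Measure Ω) (u w : Ω → ℝ) (hu : Measurable u)
    (hnn : ∀ᵐ x ∂μ, 0 ≤ u x) (hw : MemLp w 2 μ) :
    (∀ ε₁ ε₂ : ℝ, 0 < ε₂ → ε₂ ≤ ε₁ →
      0 ≤ (∫ x, min (u x / ε₁) (w x) * w x ∂μ) ∧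
      (∫ x, min (u x / ε₁) (w x) * w x ∂μ) ≤ ∫ x, min (u x / ε₂) (w x) * w x ∂μ ∧
      (∫ x, min (u x / ε₂) (w x) * w x ∂μ) ≤
        ∫ x, (w x * ({x | 0 < u x}.indicator (fun _ => (1:ℝ)) x) +
          min 0 (w x) * ({x | u x = 0}.indicator (fun _ => (1:ℝ)) x)) ^ 2 ∂μ) ∧
    Tendsto (fun ε : ℝ => ∫ x, min (u x / ε) (w x) * w x ∂μ) (𝓝[>] 0)
      (𝓝 (∫ x, (w x * ({x | 0 < u x}.indicator (fun _ => (1:ℝ)) x) +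
        min 0 (w x) * ({x | u x = 0}.indicator (fun _ => (1:ℝ)) x)) ^ 2 ∂μ)) := by
  have hanti := antitoneOn_integral_min_div_mul_self hu.aemeasurable hnn hw
  have hlim := tendsto_integral_min_div_mul_self hu.aemeasurable hnn hw
  refine ⟨fun ε₁ ε₂ hε₂ hle => ⟨?_, hanti hε₂ (hε₂.trans_le hle) hle,
    hanti.le_of_tendsto_nhdsGT hlim hε₂⟩, hlim⟩
  exact integral_nonneg_of_ae <| hnn.mono fun x hx =>
    min_div_mul_self_nonneg hx (hε₂.trans_le hle).le
end

section
/- Let (S, μ) be a measure space, let ν₁ ≥ 0 and ν₂ > 0, and let u_D : S → ℝ be square-integrable with respect to μ. Define ū := max(0, u_D − ν₁/ν₂) pointwise and assume that ū is μ-integrable. Then for every u : S → ℝ with u ≥ 0 μ-almost everywhere that is both μ-integrable and square-integrable, one has ν₁ ∫_S u dμ + (ν₂/2) ∫_S (u − u_D)² dμ ≥ ν₁ ∫_S ū dμ + (ν₂/2) ∫_S (ū − u_D)² dμ. -/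
open Set Filter Topology MeasureTheory

/- Pointwise, `ū x` minimises `t ↦ ν₁ t + (ν₂/2) (t - a)²` over `t ≥ 0`, where `a = u_D x`:
with `c = ν₁/ν₂`, the gap is `ν₂/2 · (t - a + c)²` when `a ≥ c`, and `t (ν₂ (c - a) + ν₂ t/2) ≥ 0`
when `a ≤ c`. Integrating the pointwise inequality gives the claim; the square term of `ū` needs no
integrability hypothesis, since it is nonnegative and a non-integrable function integrates to `0`. -/

lemma isMinOn_Ici_max_zero_sub_div {ν₁ ν₂ : ℝ} (hν₂ : 0 < ν₂) (a : ℝ) :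
    IsMinOn (fun t => ν₁ * t + ν₂ / 2 * (t - a) ^ 2) (Ici 0) (max 0 (a - ν₁ / ν₂)) := by
  intro t (ht : 0 ≤ t)
  obtain ⟨c, rfl⟩ : ∃ c, ν₁ = ν₂ * c := ⟨ν₁ / ν₂, (mul_div_cancel₀ _ hν₂.ne').symm⟩
  show ν₂ * c * max 0 (a - ν₂ * c / ν₂) + _ ≤ ν₂ * c * t + _
  rw [mul_div_cancel_left₀ c hν₂.ne']
  rcases le_total a c with hac | hca
  · rw [max_eq_left (sub_nonpos.2 hac)]
    nlinarith [mul_nonneg ht (mul_nonneg hν₂.le (sub_nonneg.2 hac)),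
      mul_nonneg hν₂.le (sq_nonneg t)]
  · rw [max_eq_right (sub_nonneg.2 hca)]
    nlinarith [mul_nonneg hν₂.le (sq_nonneg (t - a + c))]

lemma integral_add_le_of_add_le_of_nonneg {α : Type*} [MeasurableSpace α] {μ : Measure α}
    {f g h : α → ℝ} (hf : Integrable f μ) (hh : Integrable h μ) (hg : 0 ≤ᵐ[μ] g)
    (hle : ∀ᵐ x ∂μ, f x + g x ≤ h x) :
    ∫ x, f x ∂μ + ∫ x, g x ∂μ ≤ ∫ x, h x ∂μ := by
  by_cases hgi : Integrable g μ
  · rw [← integral_add hf hgi]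
    exact integral_mono_ae (hf.add hgi) hh hle
  · rw [integral_undef hgi, add_zero]
    refine integral_mono_ae hf hh ?_
    filter_upwards [hle, hg] with x hx hgx
    linarith [show (0 : ℝ) ≤ g x from hgx]

theorem projection_formula_minimizes_regularizer_general {S : Type*} [MeasurableSpace S]
    (μ : Measure S) (ν₁ ν₂ : ℝ) (hν₂ : 0 < ν₂)
    (uD : S → ℝ) (huD : MemLp uD 2 μ)
    (hbar : Integrable (fun x => max 0 (uD x - ν₁ / ν₂)) μ) :
    ∀ u : S → ℝ, (∀ᵐ x ∂μ, 0 ≤ u x) → Integrable u μ → MemLp u 2 μ →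
      ν₁ * (∫ x, max 0 (uD x - ν₁ / ν₂) ∂μ) +
          ν₂ / 2 * (∫ x, (max 0 (uD x - ν₁ / ν₂) - uD x) ^ 2 ∂μ) ≤
        ν₁ * (∫ x, u x ∂μ) + ν₂ / 2 * (∫ x, (u x - uD x) ^ 2 ∂μ) := by
  intro u hpos hu hu2
  have hsq : Integrable (fun x => (u x - uD x) ^ 2) μ := (hu2.sub huD).integrable_sq
  have key := integral_add_le_of_add_le_of_nonneg (hbar.const_mul ν₁)
    ((hu.const_mul ν₁).add (hsq.const_mul (ν₂ / 2)))
    (g := fun x => ν₂ / 2 * (max 0 (uD x - ν₁ / ν₂) - uD x) ^ 2)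
    (h := fun x => ν₁ * u x + ν₂ / 2 * (u x - uD x) ^ 2)
    (ae_of_all _ fun x => by positivity)
    (hpos.mono fun x hx => isMinOn_Ici_max_zero_sub_div hν₂ (uD x) (mem_Ici.2 hx))
  rwa [integral_add (hu.const_mul ν₁) (hsq.const_mul (ν₂ / 2)), integral_const_mul,
    integral_const_mul, integral_const_mul, integral_const_mul] at key

/-- The function `ū = max(0, u_D − ν₁/ν₂)` minimizes the cost
`u ↦ ν₁ ∫ u dμ + (ν₂/2) ∫ (u − u_D)² dμ` among all a.e. nonnegative functions `u`
that are integrable and square-integrable. -/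
theorem projection_formula_minimizes_regularizer {S : Type*} [MeasurableSpace S]
    (μ : Measure S) (ν₁ ν₂ : ℝ) (hν₁ : 0 ≤ ν₁) (hν₂ : 0 < ν₂)
    (uD : S → ℝ) (huD : MemLp uD 2 μ)
    (hbar : Integrable (fun x => max 0 (uD x - ν₁ / ν₂)) μ) :
    ∀ u : S → ℝ, (∀ᵐ x ∂μ, 0 ≤ u x) → Integrable u μ → MemLp u 2 μ →
      ν₁ * (∫ x, max 0 (uD x - ν₁ / ν₂) ∂μ) +
          ν₂ / 2 * (∫ x, (max 0 (uD x - ν₁ / ν₂) - uD x) ^ 2 ∂μ) ≤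
        ν₁ * (∫ x, u x ∂μ) + ν₂ / 2 * (∫ x, (u x - uD x) ^ 2 ∂μ) :=
  projection_formula_minimizes_regularizer_general μ ν₁ ν₂ hν₂ uD huD hbar
end

section
/- Let (Ω, μ) be a measure space and let y : Ω → ℝ be μ-integrable. Let u and u_n (n ∈ ℕ) be square-integrable functions on ℝ (with respect to Lebesgue measure) such that u_n converges weakly to u in L²(ℝ), i.e., ∫_ℝ u_n w ds → ∫_ℝ u w ds for every square-integrable w : ℝ → ℝ. Then ∫_Ω ( g_{u_n}(y(x)) − g_u(y(x)) )² dμ(x) → 0 as n → ∞. -/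
/-!
Testing the weak convergence against indicators of intervals gives `g_{u_n}(t) → g_u(t)` for
every `t`. By the uniform boundedness principle the weakly convergent sequence `u_n` is bounded
in `L²`, say by `C`, and Cauchy–Schwarz on the interval between `0` and `t` gives
`|g_{u_n}(t) - g_u(t)| ≤ (C + ‖u‖₂) √|t|`. Hence the integrands are dominated by the integrable
function `(C + ‖u‖₂)² |y|`, and dominated convergence concludes.
-/

open Set Filter Topology MeasureTheory intervalIntegral
open scoped ENNReal

theorem exists_norm_le_of_forall_exists_norm_inner_le {𝕜 E ι : Type*} [RCLike 𝕜]
    [NormedAddCommGroup E] [InnerProductSpace 𝕜 E] [CompleteSpace E] {x : ι → E}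
    (h : ∀ w, ∃ C, ∀ i, ‖inner 𝕜 (x i) w‖ ≤ C) : ∃ C, ∀ i, ‖x i‖ ≤ C := by
  obtain ⟨C, hC⟩ := banach_steinhaus (g := fun i => innerSL 𝕜 (x i)) h
  exact ⟨C, fun i => by simpa only [innerSL_apply_norm] using hC i⟩

namespace MeasureTheory

variable {α : Type*} [MeasurableSpace α] {μ : Measure α}

theorem L2.inner_toLp_eq_integral_mul {f : α → ℝ} (hf : MemLp f 2 μ) (g : Lp ℝ 2 μ) :
    inner ℝ (hf.toLp f) g = ∫ x, f x * g x ∂μ := by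
  rw [L2.inner_def]
  refine integral_congr_ae ?_
  filter_upwards [hf.coeFn_toLp] with x hx
  rw [hx, real_inner_eq_re_inner, RCLike.inner_apply]
  simp [mul_comm]

theorem abs_setIntegral_le_eLpNorm_mul_sqrt {v : α → ℝ} (hv : MemLp v 2 μ) {s : Set α}
    (hs : MeasurableSet s) (hμs : μ s ≠ ∞) :
    |∫ x in s, v x ∂μ| ≤ (eLpNorm v 2 μ).toReal * √(μ.real s) := by
  have hint : ∫ x in s, v x ∂μ = inner ℝ (indicatorConstLp 2 hs hμs (1 : ℝ)) (hv.toLp v) := by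
    rw [L2.inner_indicatorConstLp_one]
    exact setIntegral_congr_ae hs (hv.coeFn_toLp.mono fun x hx _ => hx.symm)
  have hnorm : ‖indicatorConstLp 2 hs hμs (1 : ℝ)‖ = √(μ.real s) := by
    rw [norm_indicatorConstLp two_ne_zero ENNReal.ofNat_ne_top, Real.sqrt_eq_rpow]
    norm_num
  calc |∫ x in s, v x ∂μ|
      ≤ ‖indicatorConstLp 2 hs hμs (1 : ℝ)‖ * ‖hv.toLp v‖ := hint ▸ abs_real_inner_le_norm _ _
    _ = (eLpNorm v 2 μ).toReal * √(μ.real s) := by rw [hnorm, Lp.norm_toLp, mul_comm]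

theorem exists_eLpNorm_le_of_weak_tendsto {u : α → ℝ} {uN : ℕ → α → ℝ}
    (huN : ∀ n, MemLp (uN n) 2 μ)
    (hweak : ∀ w : α → ℝ, MemLp w 2 μ →
      Tendsto (fun n => ∫ x, uN n x * w x ∂μ) atTop (𝓝 (∫ x, u x * w x ∂μ))) :
    ∃ C, ∀ n, (eLpNorm (uN n) 2 μ).toReal ≤ C := by
  have hbdd : ∀ w : Lp ℝ 2 μ, ∃ C, ∀ n, ‖inner ℝ ((huN n).toLp (uN n)) w‖ ≤ C := by
    intro w
    simp_rw [L2.inner_toLp_eq_integral_mul]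
    obtain ⟨C, hC⟩ := (hweak w (Lp.memLp w)).norm.bddAbove_range
    exact ⟨C, fun n => hC ⟨n, rfl⟩⟩
  simpa only [Lp.norm_toLp] using exists_norm_le_of_forall_exists_norm_inner_le hbdd

theorem tendsto_setIntegral_of_weak_tendsto {u : α → ℝ} {uN : ℕ → α → ℝ}
    (hweak : ∀ w : α → ℝ, MemLp w 2 μ →
      Tendsto (fun n => ∫ x, uN n x * w x ∂μ) atTop (𝓝 (∫ x, u x * w x ∂μ)))
    {s : Set α} (hs : MeasurableSet s) (hμs : μ s ≠ ∞) :
    Tendsto (fun n => ∫ x in s, uN n x ∂μ) atTop (𝓝 (∫ x in s, u x ∂μ)) := by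
  have hmul : ∀ v : α → ℝ, ∫ x, v x * s.indicator (fun _ => 1) x ∂μ = ∫ x in s, v x ∂μ :=
    fun v => by
      rw [← integral_indicator hs]
      congr 1 with x
      by_cases hx : x ∈ s <;> simp [hx]
  simpa only [hmul] using hweak _ (memLp_indicator_const 2 hs (1 : ℝ) (Or.inr hμs))

theorem MemLp.intervalIntegrable {v : ℝ → ℝ} {p : ℝ≥0∞} (hv : MemLp v p volume) (hp : 1 ≤ p)
    (a b : ℝ) : IntervalIntegrable v volume a b :=
  ((hv.locallyIntegrable hp).integrableOn_isCompact isCompact_uIcc).intervalIntegrable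

end MeasureTheory

theorem abs_intervalIntegral_le_eLpNorm_mul_sqrt {v : ℝ → ℝ} (hv : MemLp v 2 volume) (a b : ℝ) :
    |∫ s in a..b, v s| ≤ (eLpNorm v 2 volume).toReal * √|b - a| := by
  rw [abs_intervalIntegral_eq]
  have h := abs_setIntegral_le_eLpNorm_mul_sqrt hv (measurableSet_uIoc (a := a) (b := b))
    (by simp [Real.volume_uIoc])
  rwa [measureReal_def, Real.volume_uIoc, ENNReal.toReal_ofReal (abs_nonneg _)] at h

theorem tendsto_intervalIntegral_of_weak_tendsto {u : ℝ → ℝ} {uN : ℕ → ℝ → ℝ}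
    (hweak : ∀ w : ℝ → ℝ, MemLp w 2 volume →
      Tendsto (fun n => ∫ s, uN n s * w s) atTop (𝓝 (∫ s, u s * w s))) (a b : ℝ) :
    Tendsto (fun n => ∫ s in a..b, uN n s) atTop (𝓝 (∫ s in a..b, u s)) := by
  simp_rw [intervalIntegral_eq_integral_uIoc]
  exact (tendsto_setIntegral_of_weak_tendsto hweak measurableSet_uIoc
    (by simp [Real.volume_uIoc])).const_smul _

theorem sq_intervalIntegral_sub_le {v w : ℝ → ℝ} (hv : MemLp v 2 volume) (hw : MemLp w 2 volume)
    {C : ℝ} (hC : (eLpNorm v 2 volume).toReal ≤ C) (a b : ℝ) :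
    ((∫ s in a..b, v s) - ∫ s in a..b, w s) ^ 2
      ≤ (C + (eLpNorm w 2 volume).toReal) ^ 2 * |b - a| := by
  have habs : |(∫ s in a..b, v s) - ∫ s in a..b, w s|
      ≤ (C + (eLpNorm w 2 volume).toReal) * √|b - a| :=
    calc |(∫ s in a..b, v s) - ∫ s in a..b, w s|
        ≤ |∫ s in a..b, v s| + |∫ s in a..b, w s| := abs_sub _ _
      _ ≤ C * √|b - a| + (eLpNorm w 2 volume).toReal * √|b - a| := by
          gcongr
          · exact (abs_intervalIntegral_le_eLpNorm_mul_sqrt hv a b).trans (by gcongr)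
          · exact abs_intervalIntegral_le_eLpNorm_mul_sqrt hw a b
      _ = (C + (eLpNorm w 2 volume).toReal) * √|b - a| := by ring
  calc ((∫ s in a..b, v s) - ∫ s in a..b, w s) ^ 2
      = |(∫ s in a..b, v s) - ∫ s in a..b, w s| ^ 2 := (sq_abs _).symm
    _ ≤ ((C + (eLpNorm w 2 volume).toReal) * √|b - a|) ^ 2 := by gcongr
    _ = (C + (eLpNorm w 2 volume).toReal) ^ 2 * |b - a| := by
        rw [mul_pow, Real.sq_sqrt (abs_nonneg _)]

theorem tendsto_integral_sq_sub_comp_of_sq_sub_le {Ω : Type*} [MeasurableSpace Ω] {μ : Measure Ω}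
    {y : Ω → ℝ} (hy : Integrable y μ) {G : ℕ → ℝ → ℝ} {g : ℝ → ℝ}
    (hG : ∀ n, Measurable (G n)) (hg : Measurable g)
    (hlim : ∀ t, Tendsto (fun n => G n t) atTop (𝓝 (g t)))
    {K : ℝ} (hK : ∀ n t, (G n t - g t) ^ 2 ≤ K * |t|) :
    Tendsto (fun n => ∫ x, (G n (y x) - g (y x)) ^ 2 ∂μ) atTop (𝓝 0) := by
  have hmeas : ∀ n, Measurable fun t => (G n t - g t) ^ 2 :=
    fun n => ((hG n).sub hg).pow_const 2
  simpa using tendsto_integral_of_dominated_convergence (μ := μ) (f := fun _ => 0)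
    (F := fun n x => (G n (y x) - g (y x)) ^ 2) (fun x => K * |y x|)
    (fun n => ((hmeas n).comp_aemeasurable hy.aemeasurable).aestronglyMeasurable)
    (hy.abs.const_mul K)
    (fun n => ae_of_all _ fun x => by
      rw [Real.norm_of_nonneg (sq_nonneg _)]; exact hK n (y x))
    (ae_of_all _ fun x => by simpa using ((hlim (y x)).sub_const (g (y x))).pow 2)

/-- If `u_n ⇀ u` weakly in `L²(ℝ)` and `y` is `μ`-integrable, then
`∫_Ω (g_{u_n}(y(x)) − g_u(y(x)))² dμ → 0`, where `g_v(t) = ∫₀ᵗ v`. -/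
theorem weak_convergence_implies_convergence_of_compositions {Ω : Type*}
    [MeasurableSpace Ω] (μ : Measure Ω) (y : Ω → ℝ) (hy : Integrable y μ)
    (u : ℝ → ℝ) (uN : ℕ → ℝ → ℝ)
    (hu : MemLp u 2 (volume : Measure ℝ))
    (huN : ∀ n, MemLp (uN n) 2 (volume : Measure ℝ))
    (hweak : ∀ w : ℝ → ℝ, MemLp w 2 (volume : Measure ℝ) →
      Tendsto (fun n => ∫ s, uN n s * w s) atTop (𝓝 (∫ s, u s * w s))) :
    Tendsto
      (fun n => ∫ x, ((∫ s in (0:ℝ)..(y x), uN n s) - ∫ s in (0:ℝ)..(y x), u s) ^ 2 ∂μ)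
      atTop (𝓝 0) := by
  obtain ⟨C, hC⟩ := exists_eLpNorm_le_of_weak_tendsto huN hweak
  have hprim : ∀ {v : ℝ → ℝ}, MemLp v 2 volume → Measurable fun t => ∫ s in (0:ℝ)..t, v s :=
    fun hv => (continuous_primitive (hv.intervalIntegrable one_le_two) 0).measurable
  have hbound : ∀ n t, ((∫ s in (0:ℝ)..t, uN n s) - ∫ s in (0:ℝ)..t, u s) ^ 2
      ≤ (C + (eLpNorm u 2 volume).toReal) ^ 2 * |t| := fun n t => by
    simpa using sq_intervalIntegral_sub_le (huN n) hu (hC n) 0 t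
  exact tendsto_integral_sq_sub_comp_of_sq_sub_le hy
    (G := fun n t => ∫ s in (0:ℝ)..t, uN n s) (g := fun t => ∫ s in (0:ℝ)..t, u s)
    (fun n => hprim (huN n)) (hprim hu) (tendsto_intervalIntegral_of_weak_tendsto hweak 0) hbound
end
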